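/- Let (X, ρ) be a metric space, Y ⊆ X, and suppose the covering number satisfies log N_X(s, Y, ρ) ≤ c₁ s^{-γ} for all s ∈ (0, s₀), with constants c₁ > 0, γ > 0, s₀ > 0. Let P be a Borel probability measure on X with P(Y) = 1, and define ψ(x,h) = P({y ∈ Y : ρ(x,y) < h}). Then for all δ > 0 and all h ∈ (0, 2s₀), P({x ∈ Y : ψ(x,h) ≤ δ}) ≤ δ · exp(c₁ · 4^γ · h^{-γ}). -/

import Mathlib

/-!
If `A` is the set of points `x ∈ Y` whose `h`-ball carries mass at most `δ`, then every ball of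
radius `h / 4` meeting `A` at some `x` lies inside the `h`-ball around `x`, so it carries at most
`δ` of `A`. Covering `Y` by `N(h / 4) ≤ exp (c₁ (h / 4)^(-γ))` such balls gives
`P A ≤ δ · N(h / 4)`.
-/

open Metric MeasureTheory
open scoped ENNReal

/-- Covering number of `Y` at radius `δ` by open balls with centers anywhere in `X`. -/
noncomputable def coveringNumber {X : Type*} [MetricSpace X] (Y : Set X) (δ : ℝ) : ℕ∞ :=
  ⨅ (s : Finset X) (_ : Y ⊆ ⋃ c ∈ s, Metric.ball c δ), (s.card : ℕ∞)

section

variable {X : Type*} [MetricSpace X]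

theorem exists_finset_cover_card_eq_coveringNumber {Y : Set X} {r : ℝ}
    (hY : coveringNumber Y r ≠ ⊤) :
    ∃ F : Finset X, Y ⊆ ⋃ c ∈ F, ball c r ∧ (F.card : ℕ∞) = coveringNumber Y r := by
  rw [_root_.coveringNumber, iInf_subtype'] at hY ⊢
  have : Nonempty {F : Finset X // Y ⊆ ⋃ c ∈ F, ball c r} :=
    not_isEmpty_iff.mp fun _ ↦ hY (iInf_of_empty _)
  obtain ⟨⟨F, hF⟩, hmin⟩ :=
    ENat.exists_eq_iInf fun F : {F : Finset X // Y ⊆ ⋃ c ∈ F, ball c r} ↦ (F.1.card : ℕ∞)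
  exact ⟨F, hF, hmin⟩

variable [MeasurableSpace X]

theorem measure_inter_ball_le_of_measure_ball_le (μ : Measure X) {Y A : Set X} {r R : ℝ}
    {ε : ℝ≥0∞} (hrR : 2 * r ≤ R) (hA : ∀ x ∈ A, μ {y ∈ Y | dist x y < R} ≤ ε) (hAY : A ⊆ Y)
    (c : X) :
    μ (A ∩ ball c r) ≤ ε := by
  rcases (A ∩ ball c r).eq_empty_or_nonempty with hempty | ⟨x, hxA, hxc⟩
  · simp [hempty]
  have hsub : A ∩ ball c r ⊆ {y ∈ Y | dist x y < R} := fun y ⟨hyA, hyc⟩ ↦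
    ⟨hAY hyA, by rw [mem_ball] at hxc hyc; linarith [dist_triangle_right x y c]⟩
  exact (measure_mono hsub).trans (hA x hxA)

theorem measure_le_card_mul_of_subset_biUnion_ball (μ : Measure X) {A : Set X} {F : Finset X}
    {r : ℝ} {ε : ℝ≥0∞} (hAF : A ⊆ ⋃ c ∈ F, ball c r) (hball : ∀ c ∈ F, μ (A ∩ ball c r) ≤ ε) :
    μ A ≤ F.card * ε :=
  calc μ A = μ (⋃ c ∈ F, A ∩ ball c r) := by
        rw [← Set.inter_iUnion₂, Set.inter_eq_left.mpr hAF]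
    _ ≤ ∑ c ∈ F, μ (A ∩ ball c r) := measure_biUnion_finset_le F _
    _ ≤ ∑ _c ∈ F, ε := Finset.sum_le_sum hball
    _ = F.card * ε := by rw [Finset.sum_const, nsmul_eq_mul]

theorem measure_setOf_measure_ball_le_le_coveringNumber_mul (μ : Measure X) (Y : Set X)
    {r R : ℝ} (hrR : 2 * r ≤ R) (ε : ℝ≥0∞) (hY : coveringNumber Y r ≠ ⊤) :
    μ {x ∈ Y | μ {y ∈ Y | dist x y < R} ≤ ε} ≤ coveringNumber Y r * ε := by
  obtain ⟨F, hFY, hF⟩ := exists_finset_cover_card_eq_coveringNumber hY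
  rw [← hF]
  refine measure_le_card_mul_of_subset_biUnion_ball μ (fun x hx ↦ hFY hx.1) fun c _ ↦ ?_
  exact measure_inter_ball_le_of_measure_ball_le μ hrR (fun x hx ↦ hx.2) (fun x hx ↦ hx.1) c

end

theorem Real.div_rpow_neg {x a : ℝ} (hx : 0 ≤ x) (ha : 0 ≤ a) (γ : ℝ) :
    (x / a) ^ (-γ) = a ^ γ * x ^ (-γ) := by
  rw [Real.div_rpow hx ha, Real.rpow_neg ha, div_inv_eq_mul, mul_comm]

theorem measure_small_ball_le_general
    {X : Type*} [MetricSpace X]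
    [MeasurableSpace X]
    (Y : Set X)
    (c₁ γ s₀ : ℝ)
    (hent : ∀ s : ℝ, 0 < s → s < s₀ →
      (coveringNumber Y s : ℝ≥0∞) ≤ ENNReal.ofReal (Real.exp (c₁ * s ^ (-γ))))
    (P : Measure X)
    (ψ : X → ℝ → ℝ≥0∞) (hψ : ∀ x h, ψ x h = P {y ∈ Y | dist x y < h})
    (δ : ℝ) (h : ℝ) (hh : 0 < h) (hhs : h < 2 * s₀) :
    P {x ∈ Y | ψ x h ≤ ENNReal.ofReal δ} ≤
      ENNReal.ofReal (δ * Real.exp (c₁ * 4 ^ γ * h ^ (-γ))) := by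
  have hcov := hent (h / 4) (by positivity) (by linarith)
  rw [Real.div_rpow_neg hh.le zero_le_four, ← mul_assoc] at hcov
  have hfin : coveringNumber Y (h / 4) ≠ ⊤ :=
    ENat.toENNReal_ne_top.mp (ne_top_of_le_ne_top ENNReal.ofReal_ne_top hcov)
  simp only [hψ]
  calc P {x ∈ Y | P {y ∈ Y | dist x y < h} ≤ ENNReal.ofReal δ}
      ≤ coveringNumber Y (h / 4) * ENNReal.ofReal δ :=
        measure_setOf_measure_ball_le_le_coveringNumber_mul P Y (by linarith) _ hfin
    _ ≤ ENNReal.ofReal (Real.exp (c₁ * 4 ^ γ * h ^ (-γ))) * ENNReal.ofReal δ := by gcongr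
    _ = ENNReal.ofReal (δ * Real.exp (c₁ * 4 ^ γ * h ^ (-γ))) := by
        rw [← ENNReal.ofReal_mul (Real.exp_nonneg _), mul_comm]

/-- Lemma 1 (Lemma `Ltop`): small-ball probability bound under a metric entropy condition. -/
theorem measure_small_ball_le
    {X : Type*} [MetricSpace X] [SecondCountableTopology X] [CompleteSpace X]
    [MeasurableSpace X] [BorelSpace X]
    (Y : Set X) (hYm : MeasurableSet Y)
    (c₁ γ s₀ : ℝ) (hc₁ : 0 < c₁) (hγ : 0 < γ) (hs₀ : 0 < s₀)
    (hent : ∀ s : ℝ, 0 < s → s < s₀ →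
      (coveringNumber Y s : ℝ≥0∞) ≤ ENNReal.ofReal (Real.exp (c₁ * s ^ (-γ))))
    (P : Measure X) [IsProbabilityMeasure P] (hP : P Y = 1)
    (ψ : X → ℝ → ℝ≥0∞) (hψ : ∀ x h, ψ x h = P {y ∈ Y | dist x y < h})
    (δ : ℝ) (hδ : 0 < δ) (h : ℝ) (hh : 0 < h) (hhs : h < 2 * s₀) :
    P {x ∈ Y | ψ x h ≤ ENNReal.ofReal δ} ≤
      ENNReal.ofReal (δ * Real.exp (c₁ * 4 ^ γ * h ^ (-γ))) :=
  measure_small_ball_le_general Y c₁ γ s₀ hent P ψ hψ δ h hh hhs
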